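/- arXiv:2601.13161 — 3 statements merged into one kernel-verified Lean document; each statement's English description precedes it below -/
import Mathlib

section
/- For a non-empty compact metric space X, the quantity dim(X, Prob(X)) equals the Lebesgue covering dimension of X. -/
open MeasureTheory Set
open scoped ENNReal Classical

/-- The order of a finite collection of sets at a point: (number of members containing x) − 1. -/
noncomputable def ordAt {X : Type*} (V : Finset (Set X)) (x : X) : ℝ :=
  ((V.filter fun A => x ∈ A).card : ℝ) - 1

/-- A finite open cover. -/
def IsOpenCover {X : Type*} [TopologicalSpace X] (U : Finset (Set X)) : Prop :=
  (∀ A ∈ U, IsOpen A) ∧ ⋃₀ (U : Set (Set X)) = Set.univ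

/-- `Refines U V` : every element of `V` is contained in some element of `U` (V ⪰ U). -/
def Refines {X : Type*} (U V : Finset (Set X)) : Prop :=
  ∀ B ∈ V, ∃ A ∈ U, B ⊆ A

/-- ord(V,P) = sup over μ ∈ P of ∫ ord(V,x) dμ(x). -/
noncomputable def ordP {X : Type*} [TopologicalSpace X] [MeasurableSpace X]
    (V : Finset (Set X)) (P : Set (ProbabilityMeasure X)) : EReal :=
  ⨆ μ ∈ P, ((∫ x, ordAt V x ∂(μ : Measure X) : ℝ) : EReal)

/-- dim(X,P) = sup over finite open covers U of inf over finite open covers V refining U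
of ord(V,P). -/
noncomputable def dimPair (X : Type*) [TopologicalSpace X] [MeasurableSpace X]
    (P : Set (ProbabilityMeasure X)) : EReal :=
  ⨆ U ∈ {U : Finset (Set X) | IsOpenCover U},
    ⨅ V ∈ {V : Finset (Set X) | IsOpenCover V ∧ Refines U V}, ordP V P

/-- The Lebesgue covering dimension of X, expressed via orders of refining covers,
as an extended real. -/
noncomputable def covDim (X : Type*) [TopologicalSpace X] : EReal :=
  ⨆ U ∈ {U : Finset (Set X) | IsOpenCover U},
    ⨅ V ∈ {V : Finset (Set X) | IsOpenCover V ∧ Refines U V},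
      ⨆ x : X, ((ordAt V x : ℝ) : EReal)

set_option linter.unusedSectionVars false

section
variable {X : Type*} [MetricSpace X] [CompactSpace X] [Nonempty X]
    [MeasurableSpace X] [BorelSpace X]

lemma ordAt_eq_sum (V : Finset (Set X)) (x : X) :
    ordAt V x = (∑ A ∈ V, if x ∈ A then (1:ℝ) else 0) - 1 := by
  rw [ordAt, Finset.card_filter]
  push_cast
  ring

lemma ordAt_measurable (V : Finset (Set X)) (hV : ∀ A ∈ V, IsOpen A) :
    Measurable (ordAt V) := by
  simp only [funext (ordAt_eq_sum V)]
  apply Measurable.sub _ measurable_const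
  exact Finset.measurable_sum _ fun A hA =>
    Measurable.ite (hV A hA).measurableSet measurable_const measurable_const

lemma ordAt_integrable (V : Finset (Set X)) (hV : ∀ A ∈ V, IsOpen A)
    (μ : ProbabilityMeasure X) : Integrable (ordAt V) (μ : Measure X) := by
  simp only [funext (ordAt_eq_sum V)]
  apply Integrable.sub _ (integrable_const 1)
  exact integrable_finset_sum _ fun A hA => by
    have : (fun x => if x ∈ A then (1:ℝ) else 0) = A.indicator (fun _ => 1) := by
      ext x; simp [Set.indicator]
    rw [this]
    exact (integrable_const (1:ℝ)).indicator (hV A hA).measurableSet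

lemma exists_max (V : Finset (Set X)) : ∃ x₀ : X, ∀ x, ordAt V x ≤ ordAt V x₀ := by
  set g : X → ℕ := fun x => (V.filter fun A => x ∈ A).card with hg
  have hb : ∀ x, g x ∈ Finset.range (V.card + 1) := fun x => by
    simp [g, Nat.lt_succ_iff, Finset.card_filter_le]
  obtain ⟨x⟩ := ‹Nonempty X›
  set T := (Finset.range (V.card + 1)).filter fun k => ∃ x, g x = k with hT
  have hTne : T.Nonempty := ⟨g x, by simp [T, hb x]⟩
  have hmem : T.max' hTne ∈ Finset.filter (fun k => ∃ x, g x = k) (Finset.range (V.card + 1)) :=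
    T.max'_mem hTne
  obtain ⟨-, x₀, hx₀⟩ := Finset.mem_filter.mp hmem
  refine ⟨x₀, fun y => ?_⟩
  have : g y ≤ g x₀ := by
    rw [hx₀]
    exact T.le_max' _ (by simp [T, hb y])
  simp only [ordAt]
  have := Nat.cast_le (α := ℝ).2 this
  linarith

lemma key (V : Finset (Set X)) (hV : ∀ A ∈ V, IsOpen A) :
    (⨆ μ ∈ (Set.univ : Set (ProbabilityMeasure X)),
      ((∫ x, ordAt V x ∂(μ : Measure X) : ℝ) : EReal)) =
    ⨆ x : X, ((ordAt V x : ℝ) : EReal) := by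
  obtain ⟨x₀, hx₀⟩ := exists_max V
  apply le_antisymm
  · refine iSup₂_le fun μ _ => ?_
    refine le_trans ?_ (le_iSup (fun x => ((ordAt V x : ℝ) : EReal)) x₀)
    rw [EReal.coe_le_coe_iff]
    calc ∫ x, ordAt V x ∂(μ : Measure X) ≤ ∫ _, ordAt V x₀ ∂(μ : Measure X) :=
          integral_mono (ordAt_integrable V hV μ) (integrable_const _) hx₀
      _ = ordAt V x₀ := by simp
  · refine iSup_le fun x => ?_
    have hδ : IsProbabilityMeasure (Measure.dirac x) := inferInstance
    refine le_trans ?_ (le_iSup₂ (f := fun μ (_ : μ ∈ (Set.univ : Set (ProbabilityMeasure X))) =>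
      ((∫ y, ordAt V y ∂(μ : Measure X) : ℝ) : EReal)) ⟨Measure.dirac x, hδ⟩ trivial)
    simp [integral_dirac]

end

/-- For a non-empty compact metric space X, dim(X, Prob(X)) equals the Lebesgue covering
dimension of X. -/
theorem stmt6 {X : Type*} [MetricSpace X] [CompactSpace X] [Nonempty X]
    [MeasurableSpace X] [BorelSpace X] :
    dimPair X (Set.univ : Set (ProbabilityMeasure X)) = covDim X := by
  unfold dimPair covDim ordP
  refine iSup_congr fun U => iSup_congr fun hU => iInf_congr fun V => iInf_congr fun hV => ?_
  exact key V hV.1.1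
end

section
/- Let Γ be a finite group and (X,T) a free Γ-dynamical system on a compact metric space X. Then dim(X,T) ≥ dim(X)/|Γ|, where dim(X) is the Lebesgue covering dimension of X. -/
open MeasureTheory Set
open scoped ENNReal Classical

/-- The set of T-invariant Borel probability measures. -/
def invProb {X Γ : Type*} [TopologicalSpace X] [MeasurableSpace X]
    (T : Γ → X ≃ₜ X) : Set (ProbabilityMeasure X) :=
  {μ | ∀ γ : Γ, (μ : Measure X).map (T γ) = (μ : Measure X)}

/-- The capacity of a Borel set with respect to the action:
cap(A,T) = sup over invariant μ of μ(A). -/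
noncomputable def cap {X Γ : Type*} [TopologicalSpace X] [MeasurableSpace X]
    (T : Γ → X ≃ₜ X) (A : Set X) : ℝ≥0∞ :=
  ⨆ μ ∈ invProb T, (μ : Measure X) A

/-- dim(X,T) = sup over finite open covers U of inf over finite open covers V refining U
of sup over invariant μ of ∫ ord(V,x) dμ(x). -/
noncomputable def dimDyn {X Γ : Type*} [TopologicalSpace X] [MeasurableSpace X]
    (T : Γ → X ≃ₜ X) : ℝ≥0∞ :=
  ⨆ U ∈ {U : Finset (Set X) | IsOpenCover U},
    ⨅ V ∈ {V : Finset (Set X) | IsOpenCover V ∧ Refines U V},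
      ⨆ μ ∈ invProb T, ENNReal.ofReal (∫ x, ordAt V x ∂(μ : Measure X))

/-- The Lebesgue covering dimension of X (as an extended nonnegative real), expressed as
sup over finite open covers U of inf over finite open covers V refining U of
sup over x of ord(V,x). -/
noncomputable def covDimE (X : Type*) [TopologicalSpace X] : ℝ≥0∞ :=
  ⨆ U ∈ {U : Finset (Set X) | IsOpenCover U},
    ⨅ V ∈ {V : Finset (Set X) | IsOpenCover V ∧ Refines U V},
      ⨆ x : X, (((V.filter fun A => x ∈ A).card : ℝ≥0∞) - 1)

/-!
Averaging the Dirac masses along an orbit `γ ↦ T γ x₀` gives a `T`-invariant probability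
measure whose integral of a nonnegative `f` is at least `f x₀ / |Γ|` (the term `γ = 1`).
Taking `f = ord(V, ·)` at every point bounds `sup_x ord(V, x) / |Γ|` by the supremum over
invariant measures of `∫ ord(V, ·)`, for every open cover `V`; dividing the formula for
`dim X` by `|Γ|` termwise gives the claim.
-/

section OrbitMeasure

variable {X Γ : Type*} [MeasurableSpace X] [Fintype Γ]

noncomputable def orbitMeasure (T : Γ → X → X) (x₀ : X) : Measure X :=
  (Fintype.card Γ : ℝ≥0∞)⁻¹ • ∑ γ, Measure.dirac (T γ x₀)

lemma isProbabilityMeasure_orbitMeasure [Nonempty Γ] (T : Γ → X → X) (x₀ : X) :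
    IsProbabilityMeasure (orbitMeasure T x₀) := by
  constructor
  simp [orbitMeasure, ENNReal.inv_mul_cancel]

lemma map_orbitMeasure [Group Γ] {T : Γ → X → X}
    (hT : ∀ γ γ' x, T (γ * γ') x = T γ (T γ' x))
    {γ : Γ} (hγ : Measurable (T γ)) (x₀ : X) :
    (orbitMeasure T x₀).map (T γ) = orbitMeasure T x₀ := by
  rw [orbitMeasure, Measure.map_smul, Measure.map_finset_sum' hγ.aemeasurable]
  simp only [Measure.map_dirac' hγ, ← hT]
  congr 1
  exact Fintype.sum_equiv (Equiv.mulLeft γ) _ _ fun _ => rfl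

lemma integral_orbitMeasure [MeasurableSingletonClass X] (T : Γ → X → X) (x₀ : X)
    (f : X → ℝ) :
    ∫ x, f x ∂orbitMeasure T x₀ = (∑ γ, f (T γ x₀)) / Fintype.card Γ := by
  rw [orbitMeasure, integral_smul_measure,
    integral_finsetSum_measure fun γ _ => integrable_dirac (by simp)]
  simp [integral_dirac, div_eq_inv_mul]

lemma div_card_le_integral_orbitMeasure [MeasurableSingletonClass X] (T : Γ → X → X)
    (x₀ : X) {f : X → ℝ} (hf : 0 ≤ f) (γ : Γ) :
    f (T γ x₀) / Fintype.card Γ ≤ ∫ x, f x ∂orbitMeasure T x₀ := by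
  rw [integral_orbitMeasure]
  gcongr
  exact Finset.single_le_sum (fun γ _ => hf (T γ x₀)) (Finset.mem_univ γ)

end OrbitMeasure

lemma apply_one_eq_of_map_mul {X Γ : Type*} [Group Γ] {T : Γ → X ≃ X}
    (hT : ∀ γ γ' x, T (γ * γ') x = T γ (T γ' x)) (x : X) : T 1 x = x :=
  (T 1).injective (by rw [← hT, one_mul])

lemma ofReal_div_card_le_iSup_integral {X Γ : Type*} [TopologicalSpace X] [MeasurableSpace X]
    [BorelSpace X] [MeasurableSingletonClass X] [Group Γ] [Fintype Γ]
    {T : Γ → X ≃ₜ X} (hT : ∀ γ γ' x, T (γ * γ') x = T γ (T γ' x))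
    {f : X → ℝ} (hf : 0 ≤ f) (x₀ : X) :
    ENNReal.ofReal (f x₀) / Fintype.card Γ ≤
      ⨆ μ ∈ invProb T, ENNReal.ofReal (∫ x, f x ∂(μ : Measure X)) := by
  have hT1 : T 1 x₀ = x₀ := apply_one_eq_of_map_mul (T := fun γ => (T γ).toEquiv) hT x₀
  have hprob := isProbabilityMeasure_orbitMeasure (fun γ => ⇑(T γ)) x₀
  let μ : ProbabilityMeasure X := ⟨orbitMeasure (fun γ => ⇑(T γ)) x₀, hprob⟩
  have hμ : μ ∈ invProb T := fun γ =>
    map_orbitMeasure (T := fun γ => ⇑(T γ)) hT (T γ).continuous.measurable x₀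
  have hint := div_card_le_integral_orbitMeasure (fun γ => ⇑(T γ)) x₀ hf 1
  simp only [hT1] at hint
  calc ENNReal.ofReal (f x₀) / Fintype.card Γ
      = ENNReal.ofReal (f x₀ / Fintype.card Γ) := by
        rw [ENNReal.ofReal_div_of_pos (by positivity), ENNReal.ofReal_natCast]
    _ ≤ ENNReal.ofReal (∫ x, f x ∂(μ : Measure X)) := ENNReal.ofReal_le_ofReal hint
    _ ≤ ⨆ μ ∈ invProb T, ENNReal.ofReal (∫ x, f x ∂(μ : Measure X)) :=
        le_biSup (fun ν : ProbabilityMeasure X => ENNReal.ofReal (∫ x, f x ∂(ν : Measure X)))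
          hμ

lemma ofReal_ordAt {X : Type*} (V : Finset (Set X)) (x : X) :
    ENNReal.ofReal (ordAt V x) = ((V.filter fun A => x ∈ A).card : ℝ≥0∞) - 1 := by
  rw [ordAt, ENNReal.ofReal_sub _ zero_le_one]
  simp

lemma ordAt_nonneg {X : Type*} {V : Finset (Set X)} (hV : ⋃₀ (V : Set (Set X)) = univ) (x : X) :
    0 ≤ ordAt V x := by
  obtain ⟨A, hA, hxA⟩ : x ∈ ⋃₀ (V : Set (Set X)) := hV ▸ mem_univ x
  rw [ordAt, sub_nonneg, Nat.one_le_cast, Nat.one_le_iff_ne_zero, ← Nat.pos_iff_ne_zero]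
  exact Finset.card_pos.2 ⟨A, Finset.mem_filter.2 ⟨hA, hxA⟩⟩

theorem stmt12_general {X Γ : Type*} [MetricSpace X] [MeasurableSpace X] [BorelSpace X]
    [Group Γ] [Fintype Γ] (T : Γ → X ≃ₜ X)
    (hT : ∀ γ γ' : Γ, ∀ x : X, T (γ * γ') x = T γ (T γ' x)) :
    covDimE X / (Fintype.card Γ : ℝ≥0∞) ≤ dimDyn T := by
  rw [covDimE, dimDyn]
  simp only [ENNReal.iSup_div]
  refine iSup₂_mono fun U _ => le_iInf₂ fun V hV => ?_
  calc _ ≤ (⨆ x : X, ((V.filter fun A => x ∈ A).card : ℝ≥0∞) - 1) / Fintype.card Γ :=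
        ENNReal.div_le_div_right (iInf₂_le V hV) _
    _ = ⨆ x : X, ENNReal.ofReal (ordAt V x) / Fintype.card Γ := by
        simp only [ENNReal.iSup_div, ofReal_ordAt]
    _ ≤ _ := iSup_le fun x₀ => ofReal_div_card_le_iSup_integral hT (ordAt_nonneg hV.1.2) x₀

/-- For a free action of a finite group Γ on a compact metric space,
dim(X,T) ≥ dim(X)/|Γ|. -/
theorem stmt12 {X Γ : Type*} [MetricSpace X] [CompactSpace X] [MeasurableSpace X] [BorelSpace X]
    [Group Γ] [Fintype Γ] (T : Γ → X ≃ₜ X)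
    (hT : ∀ γ γ' : Γ, ∀ x : X, T (γ * γ') x = T γ (T γ' x))
    (hfree : ∀ x : X, ∀ γ γ' : Γ, T γ x = T γ' x → γ = γ') :
    covDimE X / (Fintype.card Γ : ℝ≥0∞) ≤ dimDyn T :=
  stmt12_general T hT
end

section
/- Let Γ be a countable group, (X,T) a Γ-dynamical system, U a finite open cover of X, F a finite subset of Γ, and d ∈ ℕ. Suppose for every 1 ≤ j ≤ d and γ ∈ F there is a closed set K_{j,γ} ⊆ X such that (i) for every x ∈ X, ord(U,x) ≤ Σ_{j=1}^d Σ_{γ∈F} 1_{K_{j,γ}}(x), and (ii) for each fixed j, the sets T_γ(K_{j,γ}), γ ∈ F, are pairwise disjoint. Then for every T-invariant Borel probability measure μ on X, ∫_X ord(U,x) dμ(x) ≤ d. -/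
open MeasureTheory Set
open scoped ENNReal Classical

namespace MeasureTheory

variable {α : Type*} [MeasurableSpace α] {μ : Measure α}

theorem measure_image_eq_of_map_eq (e : α ≃ᵐ α) (he : μ.map e = μ) (s : Set α) :
    μ (e '' s) = μ s := by
  conv_lhs => rw [← he]
  rw [MeasurableEquiv.map_apply, e.preimage_image]

theorem integrable_sum_indicator_one [IsFiniteMeasure μ] {ι : Type*} (F : Finset ι)
    {K : ι → Set α} (hK : ∀ i ∈ F, MeasurableSet (K i)) :
    Integrable (fun x => ∑ i ∈ F, (K i).indicator (fun _ => (1 : ℝ)) x) μ :=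
  integrable_finsetSum F fun i hi => (integrable_const 1).indicator (hK i hi)

theorem integral_sum_indicator_one_le_one [IsProbabilityMeasure μ] {ι : Type*}
    (e : ι → α ≃ᵐ α) (he : ∀ i, μ.map (e i) = μ) (F : Finset ι) {K : ι → Set α}
    (hK : ∀ i ∈ F, MeasurableSet (K i))
    (hdisj : (F : Set ι).PairwiseDisjoint fun i => e i '' K i) :
    ∫ x, ∑ i ∈ F, (K i).indicator (fun _ => (1 : ℝ)) x ∂μ ≤ 1 := by
  have hmeasure (i : ι) : μ.real (K i) = μ.real (e i '' K i) := by
    simp only [measureReal_def, measure_image_eq_of_map_eq (e i) (he i)]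
  calc ∫ x, ∑ i ∈ F, (K i).indicator (fun _ => (1 : ℝ)) x ∂μ
      = ∑ i ∈ F, μ.real (K i) := by
        rw [integral_finsetSum F fun i hi => (integrable_const 1).indicator (hK i hi)]
        exact Finset.sum_congr rfl fun i hi => integral_indicator_one (hK i hi)
    _ = μ.real (⋃ i ∈ F, e i '' K i) := by
        rw [measureReal_biUnion_finset hdisj fun i hi => (e i).measurableSet_image.2 (hK i hi)]
        exact Finset.sum_congr rfl fun i _ => hmeasure i
    _ ≤ 1 := measureReal_le_one

end MeasureTheory

theorem ordAt_eq_sum_indicator_sub_one {X : Type*} (V : Finset (Set X)) (x : X) :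
    ordAt V x = ∑ A ∈ V, A.indicator (fun _ => (1 : ℝ)) x - 1 := by
  simp only [ordAt, Set.indicator_apply, Finset.sum_boole]

theorem integrable_ordAt {X : Type*} [MeasurableSpace X] {μ : Measure X} [IsFiniteMeasure μ]
    {V : Finset (Set X)} (hV : ∀ A ∈ V, MeasurableSet A) : Integrable (ordAt V) μ := by
  simp only [funext (ordAt_eq_sum_indicator_sub_one V)]
  exact (integrable_sum_indicator_one V fun A hA => hV A hA).sub (integrable_const 1)

theorem stmt14_general {X Γ : Type*} [MetricSpace X] [MeasurableSpace X] [BorelSpace X]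
    (T : Γ → X ≃ₜ X)
    (U : Finset (Set X)) (hU : IsOpenCover U)
    (F : Finset Γ) (d : ℕ) (K : Fin d → Γ → Set X)
    (hKclosed : ∀ j : Fin d, ∀ γ ∈ F, IsClosed (K j γ))
    (hord : ∀ x : X, ordAt U x ≤ ∑ j : Fin d, ∑ γ ∈ F, Set.indicator (K j γ) (fun _ => (1:ℝ)) x)
    (hdisj : ∀ j : Fin d, ∀ γ ∈ F, ∀ γ' ∈ F, γ ≠ γ' →
      Disjoint ((T γ) '' K j γ) ((T γ') '' K j γ'))
    (μ : ProbabilityMeasure X) (hμ : μ ∈ invProb T) :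
    (∫ x, ordAt U x ∂(μ : Measure X)) ≤ d := by
  have hK (j : Fin d) : ∀ γ ∈ F, MeasurableSet (K j γ) :=
    fun γ hγ => (hKclosed j γ hγ).measurableSet
  have hinv (γ : Γ) : (μ : Measure X).map (T γ).toMeasurableEquiv = μ := by
    rw [Homeomorph.toMeasurableEquiv_coe]
    exact hμ γ
  calc ∫ x, ordAt U x ∂(μ : Measure X)
      ≤ ∫ x, ∑ j : Fin d, ∑ γ ∈ F, (K j γ).indicator (fun _ => (1 : ℝ)) x ∂(μ : Measure X) :=
        integral_mono (integrable_ordAt fun A hA => (hU.1 A hA).measurableSet)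
          (integrable_finsetSum _ fun j _ => integrable_sum_indicator_one F (hK j)) hord
    _ = ∑ j : Fin d, ∫ x, ∑ γ ∈ F, (K j γ).indicator (fun _ => (1 : ℝ)) x ∂(μ : Measure X) :=
        integral_finsetSum _ fun j _ => integrable_sum_indicator_one F (hK j)
    _ ≤ ∑ _j : Fin d, (1 : ℝ) := Finset.sum_le_sum fun j _ =>
        integral_sum_indicator_one_le_one (fun γ => (T γ).toMeasurableEquiv) hinv F (hK j)
          (by simp_rw [Homeomorph.toMeasurableEquiv_coe]; exact hdisj j)
    _ = d := by simp

/-- Counting lemma: if ord(U,·) is dominated by the sum of indicators of closed sets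
K_{j,γ} (j ≤ d, γ ∈ F), and for each j the sets T_γ(K_{j,γ}), γ ∈ F, are pairwise
disjoint, then ∫ ord(U,x) dμ ≤ d for every invariant probability measure μ. -/
theorem stmt14 {X Γ : Type*} [MetricSpace X] [CompactSpace X] [MeasurableSpace X] [BorelSpace X]
    [Group Γ] [Countable Γ] (T : Γ → X ≃ₜ X)
    (hT : ∀ γ γ' : Γ, ∀ x : X, T (γ * γ') x = T γ (T γ' x))
    (U : Finset (Set X)) (hU : IsOpenCover U)
    (F : Finset Γ) (d : ℕ) (K : Fin d → Γ → Set X)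
    (hKclosed : ∀ j : Fin d, ∀ γ ∈ F, IsClosed (K j γ))
    (hord : ∀ x : X, ordAt U x ≤ ∑ j : Fin d, ∑ γ ∈ F, Set.indicator (K j γ) (fun _ => (1:ℝ)) x)
    (hdisj : ∀ j : Fin d, ∀ γ ∈ F, ∀ γ' ∈ F, γ ≠ γ' →
      Disjoint ((T γ) '' K j γ) ((T γ') '' K j γ'))
    (μ : ProbabilityMeasure X) (hμ : μ ∈ invProb T) :
    (∫ x, ordAt U x ∂(μ : Measure X)) ≤ d :=
  stmt14_general T U hU F d K hKclosed hord hdisj μ hμ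
end
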